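/- arXiv:2502.07097 — 4 statements merged into one kernel-verified Lean document; each statement's English description precedes it below -/
import Mathlib

section
/- Let 𝓗 be a complex inner product space, ξ ∈ 𝓗, and let σ, A, M be linear operators on 𝓗 such that A is symmetric (⟪Ax, y⟫ = ⟪x, Ay⟫ for all x, y), A·ξ = ξ, A·M = M·A, and σ·A = −A·σ. Then ⟪ξ, M·σ·ξ⟫ = 0. -/
open LinearMap

section Anticommute

variable {R M : Type*} [Ring R] [AddCommGroup M] [Module R M]

theorem LinearMap.comp_anticomm_of_comm_of_anticomm {A B C : M →ₗ[R] M}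
    (hAB : A ∘ₗ B = B ∘ₗ A) (hCA : C ∘ₗ A = -(A ∘ₗ C)) :
    A ∘ₗ (B ∘ₗ C) = -((B ∘ₗ C) ∘ₗ A) := by
  rw [← comp_assoc, hAB, comp_assoc, comp_assoc, hCA, comp_neg, neg_neg]

end Anticommute

theorem LinearMap.IsSymmetric.inner_map_self_eq_zero_of_anticomm {𝕜 E : Type*} [RCLike 𝕜]
    [NormedAddCommGroup E] [InnerProductSpace 𝕜 E] {A B : E →ₗ[𝕜] E} (hA : A.IsSymmetric)
    (hAB : A ∘ₗ B = -(B ∘ₗ A)) {ξ : E} (hξ : A ξ = ξ) :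
    inner 𝕜 ξ (B ξ) = 0 := by
  have hneg : inner 𝕜 ξ (B ξ) = -inner 𝕜 ξ (B ξ) :=
    calc inner 𝕜 ξ (B ξ)
        = inner 𝕜 (A ξ) (B ξ) := by rw [hξ]
      _ = inner 𝕜 ξ ((A ∘ₗ B) ξ) := hA ξ (B ξ)
      _ = -inner 𝕜 ξ (B ξ) := by rw [hAB, neg_apply, comp_apply, hξ, inner_neg_right]
  exact self_eq_neg.mp hneg

/-- Generalization of Lemma 2: if `A` is symmetric, `A·ξ = ξ`, `A` commutes with `M`
and anticommutes with `σ`, then `⟪ξ, M·σ·ξ⟫ = 0`. -/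
theorem measured_pauli_expectation_zero {𝓗 : Type*} [NormedAddCommGroup 𝓗]
    [InnerProductSpace ℂ 𝓗] (ξ : 𝓗) (σ A M : 𝓗 →ₗ[ℂ] 𝓗)
    (hAsym : ∀ x y : 𝓗, inner ℂ (A x) y = (inner ℂ x (A y) : ℂ))
    (hAξ : A ξ = ξ) (hAM : A ∘ₗ M = M ∘ₗ A) (hanti : σ ∘ₗ A = -(A ∘ₗ σ)) :
    (inner ℂ ξ ((M ∘ₗ σ) ξ) : ℂ) = 0 :=
  IsSymmetric.inner_map_self_eq_zero_of_anticomm hAsym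
    (comp_anticomm_of_comm_of_anticomm hAM hanti) hAξ
end

section
/- Let 𝓗 be a complex inner product space, ξ ∈ 𝓗, and let σ, A, M be linear operators on 𝓗 such that M² = M, σ·M = M·σ, A·M = M·A, σ·A = −A·σ, A is symmetric (⟪Ax, y⟫ = ⟪x, Ay⟫ for all x, y), and A·ξ = ξ. Then ⟪ξ, M·σ·A·M·ξ⟫ = 0. -/
/-!
`A` commutes with `M` and anticommutes with `σ`, so it anticommutes with `T = M σ A M`; since
`A ξ = ξ`, the vector `T ξ` lies in the `-1`-eigenspace of the symmetric operator `A`, which is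
orthogonal to its `+1`-eigenspace containing `ξ`.
-/

open Module End in
theorem LinearMap.IsSymmetric.inner_eq_zero_of_apply_eq_self_of_apply_eq_neg {𝕜 E : Type*}
    [RCLike 𝕜] [NormedAddCommGroup E] [InnerProductSpace 𝕜 E] {T : E →ₗ[𝕜] E}
    (hT : T.IsSymmetric) {x y : E} (hx : T x = x) (hy : T y = -y) : inner 𝕜 x y = 0 :=
  hT.orthogonalFamily_eigenspaces (i := 1) (j := -1) (by norm_num)
    ⟨x, mem_eigenspace_iff.2 (by rwa [one_smul])⟩ ⟨y, mem_eigenspace_iff.2 (by rwa [neg_one_smul])⟩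

theorem Commute.mul_sandwich_eq_neg_of_anticomm {R : Type*} [Ring R] {a m s : R}
    (ham : Commute a m) (hsa : s * a = -(a * s)) : a * (m * s * a * m) = -(m * s * a * m * a) := by
  have has : a * s = -(s * a) := by rw [hsa, neg_neg]
  calc a * (m * s * a * m) = m * (a * s) * a * m := by simp only [← mul_assoc, ham.eq]
    _ = -(m * s * a * (a * m)) := by rw [has]; noncomm_ring
    _ = -(m * s * a * m * a) := by rw [ham.eq, ← mul_assoc]

theorem sandwiched_pauli_vertex_expectation_zero_general {𝓗 : Type*} [NormedAddCommGroup 𝓗]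
    [InnerProductSpace ℂ 𝓗] (ξ : 𝓗) (σ A M : 𝓗 →ₗ[ℂ] 𝓗)
    (hAM : A ∘ₗ M = M ∘ₗ A)
    (hanti : σ ∘ₗ A = -(A ∘ₗ σ))
    (hAsym : ∀ x y : 𝓗, inner ℂ (A x) y = (inner ℂ x (A y) : ℂ))
    (hAξ : A ξ = ξ) :
    (inner ℂ ξ ((M ∘ₗ σ ∘ₗ A ∘ₗ M) ξ) : ℂ) = 0 := by
  refine LinearMap.IsSymmetric.inner_eq_zero_of_apply_eq_self_of_apply_eq_neg hAsym hAξ ?_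
  have hT := congr($(Commute.mul_sandwich_eq_neg_of_anticomm (s := σ) hAM hanti) ξ)
  simpa [Module.End.mul_apply, hAξ] using hT

/-- Lemma 3 of the paper: if `M² = M`, `σ` commutes with `M`, `A` commutes with `M`
and anticommutes with `σ`, `A` is symmetric and `A·ξ = ξ`, then
`⟪ξ, M·σ·A·M·ξ⟫ = 0`. -/
theorem sandwiched_pauli_vertex_expectation_zero {𝓗 : Type*} [NormedAddCommGroup 𝓗]
    [InnerProductSpace ℂ 𝓗] (ξ : 𝓗) (σ A M : 𝓗 →ₗ[ℂ] 𝓗)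
    (hM2 : M ∘ₗ M = M) (hσM : σ ∘ₗ M = M ∘ₗ σ) (hAM : A ∘ₗ M = M ∘ₗ A)
    (hanti : σ ∘ₗ A = -(A ∘ₗ σ))
    (hAsym : ∀ x y : 𝓗, inner ℂ (A x) y = (inner ℂ x (A y) : ℂ))
    (hAξ : A ξ = ξ) :
    (inner ℂ ξ ((M ∘ₗ σ ∘ₗ A ∘ₗ M) ξ) : ℂ) = 0 :=
  sandwiched_pauli_vertex_expectation_zero_general ξ σ A M hAM hanti hAsym hAξ
end

section
/- Let 𝓗 be a complex Hilbert space and ξ ∈ 𝓗 a unit vector. Let H₀, A₁, A₂, B₁, B₂, P, X, Y, Z be continuous linear operators on 𝓗 such that: A₁, A₂, B₁, B₂, P, X, Y, Z are all self-adjoint and square to the identity; A₁ξ = ξ, A₂ξ = ξ, B₁ξ = ξ, B₂ξ = ξ; X·Y = −Y·X = i·Z, Y·Z = −Z·Y = i·X, Z·X = −X·Z = i·Y; H₀ commutes with X, Y, Z; each Aᵢ commutes with X and anticommutes with Y and Z; each Bᵢ anticommutes with X and Y and commutes with Z; P commutes with X, Y, Z, A₁, A₂ and anticommutes with B₁, B₂.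 Set H = H₀ − A₁ − A₂ − B₁ − B₂, N = n_x·X + n_y·Y + n_z·Z for real n_x, n_y, n_z with n_x² + n_y² + n_z² = 1, and M_k = (1/2)·(1 + k·P) for k ∈ {−1, 1}. Then Σ_{k ∈ {−1,1}} i·k·⟪ξ, M_k·(H·N − N·H)·M_k·ξ⟫ = 0. -/
/-!
Write `⟨W⟩ = ⟪ξ, W ξ⟫`. Since `M₁ C M₁ - M₋₁ C M₋₁ = (P C + C P) / 2`, the sum equals
`(i/2) ⟨P C + C P⟩` with `C = ⁅H, N⁆ = Σ_S ⁅N, S⁆`, the sum running over the four stabilizers,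
because `H₀` commutes with `N`. For a plaquette operator `B`, which anticommutes with `P`, the
operator `P ⁅N, B⁆ + ⁅N, B⁆ P` already vanishes because `P` commutes with `N`. For a vertex
operator `A`, which commutes with `P`, it equals `⁅P N + N P, A⁆`, and the expectation of a
commutator with a self-adjoint operator fixing `ξ` vanishes.
-/

theorem smul_one_add_mul_mul_sub {R A : Type*} [CommRing R] [Ring A] [Algebra R A] (c : R)
    (P C : A) :
    (c • (1 + P)) * C * (c • (1 + P)) - (c • (1 - P)) * C * (c • (1 - P))
      = (2 * c ^ 2) • (P * C + C * P) := by
  simp only [smul_mul_assoc, mul_smul_comm, add_mul, mul_add, sub_mul, mul_sub,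
    one_mul, mul_one, mul_assoc]
  module

section Anticommutator

variable {A : Type*} [Ring A] {P S : A}

theorem Commute.mul_lie_add_lie_mul (hPS : Commute P S) (N : A) :
    P * ⁅N, S⁆ + ⁅N, S⁆ * P = ⁅P * N + N * P, S⁆ := by
  simp only [Ring.lie_def, mul_sub, sub_mul, add_mul, mul_add, mul_assoc, hPS.left_comm, hPS.eq]
  abel

theorem mul_lie_add_lie_mul_eq_zero_of_anticommute (hPS : P * S = -(S * P)) {N : A}
    (hPN : Commute P N) : P * ⁅N, S⁆ + ⁅N, S⁆ * P = 0 := by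
  have hSP : S * P = -(P * S) := by rw [hPS, neg_neg]
  have hPSN : P * (S * N) = -(S * (P * N)) := by rw [← mul_assoc, hPS, neg_mul, mul_assoc]
  simp only [Ring.lie_def, mul_sub, sub_mul, mul_assoc, hPSN, hSP, mul_neg, hPN.left_comm,
    hPN.eq]
  abel

end Anticommutator

theorem IsSelfAdjoint.inner_lie_apply_eq_zero {𝕜 E : Type*} [RCLike 𝕜] [NormedAddCommGroup E]
    [InnerProductSpace 𝕜 E] [CompleteSpace E] {ξ : E} {S : E →L[𝕜] E} (hS : IsSelfAdjoint S)
    (hSξ : S ξ = ξ) (W : E →L[𝕜] E) : inner 𝕜 ξ (⁅W, S⁆ ξ) = 0 := by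
  have hSW : inner 𝕜 ξ (S (W ξ)) = inner 𝕜 ξ (W ξ) := by
    rw [← ContinuousLinearMap.coe_coe, ← hS.isSymmetric, ContinuousLinearMap.coe_coe, hSξ]
  rw [Ring.lie_def, sub_apply, inner_sub_right, mul_apply_eq_comp, mul_apply_eq_comp, hSξ, hSW,
    sub_self]

theorem sum_sign_inner_sandwich_eq_inner_anticommutator {E : Type*} [NormedAddCommGroup E]
    [InnerProductSpace ℂ E] (ξ : E) (P C : E →L[ℂ] E) :
    ∑ k ∈ ({-1, 1} : Finset ℂ), Complex.I * k *
        inner ℂ ξ ((((1 / 2 : ℂ) • (1 + k • P)) * C * ((1 / 2 : ℂ) • (1 + k • P))) ξ)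
      = Complex.I / 2 * inner ℂ ξ ((P * C + C * P) ξ) := by
  have hsandwich : ((1 / 2 : ℂ) • (1 + (1 : ℂ) • P)) * C * ((1 / 2 : ℂ) • (1 + (1 : ℂ) • P))
      - ((1 / 2 : ℂ) • (1 + (-1 : ℂ) • P)) * C * ((1 / 2 : ℂ) • (1 + (-1 : ℂ) • P))
      = (1 / 2 : ℂ) • (P * C + C * P) := by
    simp only [one_smul, neg_one_smul, ← sub_eq_add_neg, smul_one_add_mul_mul_sub]
    norm_num
  have hinner := congrArg (fun W => inner ℂ ξ (W ξ)) hsandwich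
  simp only [sub_apply, inner_sub_right, smul_apply, inner_smul_right] at hinner
  rw [Finset.sum_pair (by norm_num)]
  linear_combination Complex.I * hinner

theorem first_order_term_vanishes_general {𝓗 : Type*} [NormedAddCommGroup 𝓗]
    [InnerProductSpace ℂ 𝓗] [CompleteSpace 𝓗] (ξ : 𝓗)
    (H₀ A₁ A₂ B₁ B₂ P X Y Z : 𝓗 →L[ℂ] 𝓗)
    (hA₁sa : IsSelfAdjoint A₁) (hA₂sa : IsSelfAdjoint A₂)
    (hA₁ξ : A₁ ξ = ξ) (hA₂ξ : A₂ ξ = ξ)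
    (hH₀X : H₀ * X = X * H₀) (hH₀Y : H₀ * Y = Y * H₀) (hH₀Z : H₀ * Z = Z * H₀)
    (hPX : P * X = X * P) (hPY : P * Y = Y * P) (hPZ : P * Z = Z * P)
    (hPA₁ : P * A₁ = A₁ * P) (hPA₂ : P * A₂ = A₂ * P)
    (hPB₁ : P * B₁ = -(B₁ * P)) (hPB₂ : P * B₂ = -(B₂ * P))
    (n_x n_y n_z : ℝ) :
    let H : 𝓗 →L[ℂ] 𝓗 := H₀ - A₁ - A₂ - B₁ - B₂
    let N : 𝓗 →L[ℂ] 𝓗 := (n_x : ℂ) • X + (n_y : ℂ) • Y + (n_z : ℂ) • Z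
    let M : ℂ → (𝓗 →L[ℂ] 𝓗) := fun k => (1 / 2 : ℂ) • (1 + k • P)
    ∑ k ∈ ({-1, 1} : Finset ℂ),
      Complex.I * k * (inner ℂ ξ ((M k * (H * N - N * H) * M k) ξ) : ℂ) = 0 := by
  intro H N M
  have hH₀N : Commute H₀ N :=
    ((Commute.smul_right hH₀X _).add_right (Commute.smul_right hH₀Y _)).add_right
      (Commute.smul_right hH₀Z _)
  have hPN : Commute P N :=
    ((Commute.smul_right hPX _).add_right (Commute.smul_right hPY _)).add_right
      (Commute.smul_right hPZ _)
  have hC : ⁅H, N⁆ = ⁅N, A₁⁆ + ⁅N, A₂⁆ + ⁅N, B₁⁆ + ⁅N, B₂⁆ := by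
    simp only [H, Ring.lie_def, sub_mul, mul_sub, hH₀N.eq]
    abel
  have hPC : P * ⁅H, N⁆ + ⁅H, N⁆ * P = ⁅P * N + N * P, A₁⁆ + ⁅P * N + N * P, A₂⁆ := by
    calc P * ⁅H, N⁆ + ⁅H, N⁆ * P
        = (P * ⁅N, A₁⁆ + ⁅N, A₁⁆ * P) + (P * ⁅N, A₂⁆ + ⁅N, A₂⁆ * P)
          + (P * ⁅N, B₁⁆ + ⁅N, B₁⁆ * P) + (P * ⁅N, B₂⁆ + ⁅N, B₂⁆ * P) := by
          rw [hC]
          simp only [mul_add, add_mul]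
          abel
      _ = _ := by
          rw [Commute.mul_lie_add_lie_mul hPA₁, Commute.mul_lie_add_lie_mul hPA₂,
            mul_lie_add_lie_mul_eq_zero_of_anticommute hPB₁ hPN,
            mul_lie_add_lie_mul_eq_zero_of_anticommute hPB₂ hPN, add_zero, add_zero]
  rw [← Ring.lie_def, sum_sign_inner_sandwich_eq_inner_anticommutator, hPC, add_apply,
    inner_add_right, hA₁sa.inner_lie_apply_eq_zero hA₁ξ, hA₂sa.inner_lie_apply_eq_zero hA₂ξ,
    add_zero, mul_zero]

/-- First-order term of the energy difference vanishes: in the abstract toric code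
QET model, `Σ_{k = ±1} i·k·⟪ξ, M_k·[H, N]·M_k·ξ⟫ = 0`. -/
theorem first_order_term_vanishes {𝓗 : Type*} [NormedAddCommGroup 𝓗]
    [InnerProductSpace ℂ 𝓗] [CompleteSpace 𝓗] (ξ : 𝓗) (hξ : ‖ξ‖ = 1)
    (H₀ A₁ A₂ B₁ B₂ P X Y Z : 𝓗 →L[ℂ] 𝓗)
    (hA₁sa : IsSelfAdjoint A₁) (hA₂sa : IsSelfAdjoint A₂)
    (hB₁sa : IsSelfAdjoint B₁) (hB₂sa : IsSelfAdjoint B₂)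
    (hPsa : IsSelfAdjoint P) (hXsa : IsSelfAdjoint X)
    (hYsa : IsSelfAdjoint Y) (hZsa : IsSelfAdjoint Z)
    (hA₁2 : A₁ * A₁ = 1) (hA₂2 : A₂ * A₂ = 1) (hB₁2 : B₁ * B₁ = 1) (hB₂2 : B₂ * B₂ = 1)
    (hP2 : P * P = 1) (hX2 : X * X = 1) (hY2 : Y * Y = 1) (hZ2 : Z * Z = 1)
    (hA₁ξ : A₁ ξ = ξ) (hA₂ξ : A₂ ξ = ξ) (hB₁ξ : B₁ ξ = ξ) (hB₂ξ : B₂ ξ = ξ)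
    (hXY : X * Y = Complex.I • Z) (hYX : Y * X = -(Complex.I • Z))
    (hYZ : Y * Z = Complex.I • X) (hZY : Z * Y = -(Complex.I • X))
    (hZX : Z * X = Complex.I • Y) (hXZ : X * Z = -(Complex.I • Y))
    (hH₀X : H₀ * X = X * H₀) (hH₀Y : H₀ * Y = Y * H₀) (hH₀Z : H₀ * Z = Z * H₀)
    (hA₁X : A₁ * X = X * A₁) (hA₁Y : A₁ * Y = -(Y * A₁)) (hA₁Z : A₁ * Z = -(Z * A₁))
    (hA₂X : A₂ * X = X * A₂) (hA₂Y : A₂ * Y = -(Y * A₂)) (hA₂Z : A₂ * Z = -(Z * A₂))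
    (hB₁X : B₁ * X = -(X * B₁)) (hB₁Y : B₁ * Y = -(Y * B₁)) (hB₁Z : B₁ * Z = Z * B₁)
    (hB₂X : B₂ * X = -(X * B₂)) (hB₂Y : B₂ * Y = -(Y * B₂)) (hB₂Z : B₂ * Z = Z * B₂)
    (hPX : P * X = X * P) (hPY : P * Y = Y * P) (hPZ : P * Z = Z * P)
    (hPA₁ : P * A₁ = A₁ * P) (hPA₂ : P * A₂ = A₂ * P)
    (hPB₁ : P * B₁ = -(B₁ * P)) (hPB₂ : P * B₂ = -(B₂ * P))
    (n_x n_y n_z : ℝ) (hn : n_x ^ 2 + n_y ^ 2 + n_z ^ 2 = 1) :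
    let H : 𝓗 →L[ℂ] 𝓗 := H₀ - A₁ - A₂ - B₁ - B₂
    let N : 𝓗 →L[ℂ] 𝓗 := (n_x : ℂ) • X + (n_y : ℂ) • Y + (n_z : ℂ) • Z
    let M : ℂ → (𝓗 →L[ℂ] 𝓗) := fun k => (1 / 2 : ℂ) • (1 + k • P)
    ∑ k ∈ ({-1, 1} : Finset ℂ),
      Complex.I * k * (inner ℂ ξ ((M k * (H * N - N * H) * M k) ξ) : ℂ) = 0 :=
  first_order_term_vanishes_general ξ H₀ A₁ A₂ B₁ B₂ P X Y Z hA₁sa hA₂sa hA₁ξ hA₂ξ hH₀X hH₀Y hH₀Z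
    hPX hPY hPZ hPA₁ hPA₂ hPB₁ hPB₂ n_x n_y n_z
end

section
/- Let 𝓗 be a complex Hilbert space and ξ ∈ 𝓗 a unit vector. Let H₀, A₁, A₂, B₁, B₂, P, X, Y, Z be continuous linear operators on 𝓗 such that: A₁, A₂, B₁, B₂, P, X, Y, Z are all self-adjoint and square to the identity; A₁ξ = ξ, A₂ξ = ξ, B₁ξ = ξ, B₂ξ = ξ; X·Y = −Y·X = i·Z, Y·Z = −Z·Y = i·X, Z·X = −X·Z = i·Y; H₀ commutes with X, Y, Z; each Aᵢ commutes with X and anticommutes with Y and Z; each Bᵢ anticommutes with X and Y and commutes with Z; P commutes with X, Y, Z, A₁, A₂ and anticommutes with B₁, B₂. Set H = H₀ − A₁ − A₂ − B₁ − B₂, N = n_x·X + n_y·Y + n_z·Z for real n_x, n_y, n_z with n_x² + n_y² + n_z² = 1, M_k = (1/2)·(1 + k·P) and U_k = (cos θ)·1 + i·k·(sin θ)·N for k ∈ {−1, 1} and θ ∈ ℝ. Then Σ_{k ∈ {−1,1}} ⟪ξ, M_k·U_k★·H·U_k·M_k·ξ⟫ − Σ_{k ∈ {−1,1}} ⟪ξ,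 M_k·H·M_k·ξ⟫ = 4·(sin θ)²·(n_y² + n_z²). In particular this quantity is nonnegative, so Bob cannot extract energy by any such local unitary: E_B ≥ E_A. -/
/-!
Bob's rotation `U_k` commutes with Alice's projectors `M_k`, so the energy change is the
expectation of `M_k (U_k⋆ H U_k - H) M_k`. The part `H₀` commutes with `U_k`, and the plaquette
terms anticommute with `P`, so `M_k B M_k = 0`: neither contributes. Only the vertex terms are
left. Split the rotation axis as `N = n_x X + (n_y Y + n_z Z)`, into the part commuting with a
vertex operator `A` and the part anticommuting with it. After summing over both outcomes, every
term that anticommutes with `A` has zero expectation in `ξ` (as `A ξ = ξ`), and what is left is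
the scalar `-2 sin² θ (n_y² + n_z²)` for each of the two vertex operators.
-/

open Finset

def Anticommute {R : Type*} [Mul R] [Neg R] (a b : R) : Prop := a * b = -(b * a)

namespace Anticommute

variable {R : Type*} [Ring R] {a b c : R}

theorem eq (h : Anticommute a b) : a * b = -(b * a) := h

theorem of_eq_neg (h₁ : a * b = c) (h₂ : b * a = -c) : Anticommute a b := by
  rw [Anticommute, h₁, h₂, neg_neg]

theorem symm (h : Anticommute a b) : Anticommute b a := by
  rw [Anticommute, h, neg_neg]

theorem add_right (hb : Anticommute a b) (hc : Anticommute a c) : Anticommute a (b + c) := by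
  rw [Anticommute, mul_add, add_mul, hb, hc, neg_add]

theorem mul_right_of_commute (hb : Anticommute a b) (hc : Commute a c) :
    Anticommute a (b * c) := by
  rw [Anticommute, ← mul_assoc, hb, neg_mul, mul_assoc, hc.eq, mul_assoc]

theorem add_mul_self (h : Anticommute a b) : (a + b) * (a + b) = a * a + b * b := by
  rw [add_mul, mul_add, mul_add, h]; abel

variable {S : Type*} [CommSemiring S] [Algebra S R]

theorem smul_right (h : Anticommute a b) (s : S) : Anticommute a (s • b) := by
  rw [Anticommute, mul_smul_comm, smul_mul_assoc, h, smul_neg]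

theorem smul_left (h : Anticommute a b) (s : S) : Anticommute (s • a) b :=
  (h.symm.smul_right s).symm

theorem smul_add_smul_mul_self (h : Anticommute a b) (ha : a * a = 1) (hb : b * b = 1) (r s : S) :
    (r • a + s • b) * (r • a + s • b) = (r ^ 2 + s ^ 2) • 1 := by
  rw [((h.smul_right s).smul_left r).add_mul_self, smul_mul_smul_comm, smul_mul_smul_comm, ha, hb,
    add_smul, sq, sq]

end Anticommute

theorem Commute.mul_right_of_anticommute {R : Type*} [Ring R] {a b c : R} (hb : Commute a b)
    (hc : Anticommute a c) : Anticommute a (b * c) := by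
  rw [Anticommute, ← mul_assoc, hb.eq, mul_assoc, hc, mul_neg, ← mul_assoc]

theorem star_eq_self_and_mul_self_of_mem {k : ℂ} (hk : k ∈ ({-1, 1} : Finset ℂ)) :
    star k = k ∧ k * k = 1 := by
  simp only [mem_insert, mem_singleton] at hk
  rcases hk with rfl | rfl <;> norm_num

section Algebra

variable {R : Type*} [Ring R] [Algebra ℂ R]

noncomputable def measProj (P : R) (k : ℂ) : R := (1 / 2 : ℂ) • (1 + k • P)

-- For `k = ±1` and `N * N = 1` this is `exp (i k θ N)`.
noncomputable def localRotation (N : R) (θ : ℝ) (k : ℂ) : R :=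
  (Real.cos θ : ℂ) • 1 + (Complex.I * k * Real.sin θ) • N

section measProj

variable {P T : R} {k : ℂ}

theorem Commute.measProj_right (h : Commute T P) (k : ℂ) : Commute T (measProj P k) :=
  ((Commute.one_right T).add_right (h.smul_right k)).smul_right _

theorem Anticommute.mul_measProj (h : Anticommute T P) (k : ℂ) :
    T * measProj P k = measProj P (-k) * T := by
  simp only [measProj, mul_smul_comm, smul_mul_assoc, mul_add, add_mul, mul_one, one_mul, h.eq]
  module

theorem measProj_mul_measProj_neg (hP : P * P = 1) (hk : k * k = 1) :
    measProj P k * measProj P (-k) = 0 := by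
  simp only [measProj, mul_smul_comm, smul_mul_assoc, mul_add, add_mul, mul_one, one_mul,
    smul_smul, hP]
  match_scalars
  · linear_combination (-1 / 4 : ℂ) * hk
  · ring

theorem measProj_mul_self (hP : P * P = 1) (hk : k * k = 1) :
    measProj P k * measProj P k = measProj P k := by
  simp only [measProj, mul_smul_comm, smul_mul_assoc, mul_add, add_mul, mul_one, one_mul,
    smul_smul, hP]
  match_scalars
  · linear_combination (1 / 4 : ℂ) * hk
  · ring

theorem Commute.measProj_mul_mul_measProj (h : Commute T P) (hP : P * P = 1) (hk : k * k = 1) :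
    measProj P k * T * measProj P k = T * measProj P k := by
  rw [mul_assoc, (h.measProj_right k).eq, ← mul_assoc, measProj_mul_self hP hk]

theorem Anticommute.measProj_mul_mul_measProj (h : Anticommute T P) (hP : P * P = 1)
    (hk : k * k = 1) : measProj P k * T * measProj P k = 0 := by
  rw [mul_assoc, h.mul_measProj, ← mul_assoc, measProj_mul_measProj_neg hP hk, zero_mul]

theorem sum_add_smul_mul_measProj (a b : R) :
    ∑ k ∈ ({-1, 1} : Finset ℂ), (a + k • b) * measProj P k = a + b * P := by
  rw [sum_pair (by norm_num)]
  simp only [measProj, mul_smul_comm, smul_mul_assoc, mul_add, add_mul, mul_one]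
  module

end measProj

section localRotation

variable {N T : R} {θ : ℝ} {k : ℂ}

theorem localRotation_neg_mul_localRotation (N N' : R) :
    localRotation N θ (-k) * localRotation N' θ k =
      (Real.cos θ ^ 2 : ℂ) • 1 + (k * k * Real.sin θ ^ 2 : ℂ) • (N * N') +
        (Complex.I * k * Real.sin θ * Real.cos θ) • (N' - N) := by
  simp only [localRotation, mul_add, add_mul, smul_mul_smul_comm, mul_one, one_mul]
  match_scalars
  · ring
  · ring
  · ring
  · linear_combination (-(k * k * Complex.sin θ ^ 2)) * Complex.I_sq

theorem Commute.localRotation_right (h : Commute T N) (θ : ℝ) (k : ℂ) :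
    Commute T (localRotation N θ k) :=
  ((Commute.one_right T).smul_right _).add_right (h.smul_right _)

theorem Commute.mul_localRotation_add {A Nc Na : R} (hc : Commute A Nc) (ha : Anticommute A Na)
    (θ : ℝ) (k : ℂ) :
    A * localRotation (Nc + Na) θ k = localRotation (Nc - Na) θ k * A := by
  simp only [localRotation, mul_add, add_mul, sub_mul, mul_smul_comm, smul_mul_assoc, mul_one,
    one_mul, hc.eq, ha.eq]
  module

variable [StarRing R] [StarModule ℂ R]

theorem star_localRotation (hN : IsSelfAdjoint N) (hk : star k = k) :
    star (localRotation N θ k) = localRotation N θ (-k) := by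
  simp only [localRotation, star_add, star_smul, star_one, hN.star_eq, star_mul', hk,
    Complex.star_def, Complex.conj_I, Complex.conj_ofReal]
  module

theorem star_localRotation_mul_self (hN : IsSelfAdjoint N) (hNN : N * N = 1) (hk : star k = k)
    (hk' : k * k = 1) : star (localRotation N θ k) * localRotation N θ k = 1 := by
  rw [star_localRotation hN hk, localRotation_neg_mul_localRotation, hNN, hk', sub_self,
    smul_zero, add_zero, one_mul, ← add_smul, Complex.ofReal_cos, Complex.ofReal_sin,
    Complex.cos_sq_add_sin_sq, one_smul]

theorem Commute.conjugate_localRotation (h : Commute T N) (hN : IsSelfAdjoint N)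
    (hNN : N * N = 1) (hk : star k = k) (hk' : k * k = 1) :
    star (localRotation N θ k) * T * localRotation N θ k = T := by
  rw [mul_assoc, (h.localRotation_right θ k).eq, ← mul_assoc,
    star_localRotation_mul_self hN hNN hk hk', one_mul]

theorem Commute.conjugate_localRotation_sub {A Nc Na : R} {β : ℂ}
    (hAc : Commute A Nc) (hAa : Anticommute A Na) (hN : IsSelfAdjoint (Nc + Na))
    (hca : Anticommute Nc Na) (hNN : (Nc + Na) * (Nc + Na) = 1) (ha : Na * Na = β • 1)
    (hk : star k = k) (hk' : k * k = 1) :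
    star (localRotation (Nc + Na) θ k) * A * localRotation (Nc + Na) θ k - A =
      (-(2 * Real.sin θ ^ 2 : ℂ) • (β • 1 + Nc * Na) +
        k • -(2 * Complex.I * Real.sin θ * Real.cos θ : ℂ) • Na) * A := by
  have hc : Nc * Nc = (1 - β) • 1 := by
    rw [sub_smul, one_smul, ← ha, eq_sub_iff_add_eq, ← hca.add_mul_self, hNN]
  rw [star_localRotation hN hk, mul_assoc, hAc.mul_localRotation_add hAa, ← mul_assoc,
    localRotation_neg_mul_localRotation, hk']
  simp only [add_mul, mul_sub, sub_mul, neg_mul, smul_add, smul_sub, smul_neg, one_mul, hc, ha,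
    hca.eq, smul_mul_assoc]
  match_scalars
  · linear_combination Complex.cos_sq_add_sin_sq θ
  all_goals ring

theorem measProj_mul_localRotation_conjugate_sub {P H₀ A₁ A₂ B₁ B₂ : R}
    (hN : IsSelfAdjoint N) (hNN : N * N = 1) (hk : star k = k) (hk' : k * k = 1)
    (hP : P * P = 1) (hNP : Commute N P) (hH₀ : Commute H₀ N)
    (hA₁ : Commute A₁ P) (hA₂ : Commute A₂ P) (hB₁ : Anticommute B₁ P) (hB₂ : Anticommute B₂ P) :
    let U := localRotation N θ k
    let M := measProj P k
    M * star U * (H₀ - A₁ - A₂ - B₁ - B₂) * U * M - M * (H₀ - A₁ - A₂ - B₁ - B₂) * M =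
      -((star U * A₁ * U - A₁) + (star U * A₂ * U - A₂)) * M := by
  intro U M
  have hNM : Commute N M := hNP.measProj_right k
  have hMU : Commute M U := hNM.symm.localRotation_right θ k
  have hMU' : Commute M (star U) := by
    rw [star_localRotation hN hk]; exact hNM.symm.localRotation_right θ (-k)
  have hMAM : ∀ A, Commute A P → M * A * M = A * M := fun A hA =>
    hA.measProj_mul_mul_measProj hP hk'
  have hMBM : ∀ B, Anticommute B P → M * B * M = 0 := fun B hB =>
    hB.measProj_mul_mul_measProj hP hk'
  have hMHM : M * (H₀ - A₁ - A₂ - B₁ - B₂) * M = M * H₀ * M - A₁ * M - A₂ * M := by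
    simp only [mul_sub, sub_mul, hMAM A₁ hA₁, hMAM A₂ hA₂, hMBM B₁ hB₁, hMBM B₂ hB₂, sub_zero]
  have hH₀' : star U * (M * H₀ * M) * U = M * H₀ * M :=
    ((hNM.mul_right hH₀.symm).mul_right hNM).symm.conjugate_localRotation hN hNN hk hk'
  have hAM : ∀ A, star U * (A * M) * U = star U * A * U * M := fun A => by
    simp only [mul_assoc, hMU.eq]
  calc M * star U * (H₀ - A₁ - A₂ - B₁ - B₂) * U * M - M * (H₀ - A₁ - A₂ - B₁ - B₂) * M
      = star U * (M * (H₀ - A₁ - A₂ - B₁ - B₂) * M) * U -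
          M * (H₀ - A₁ - A₂ - B₁ - B₂) * M := by
        rw [hMU'.eq]; simp only [mul_assoc, hMU.eq]
    _ = _ := by
        rw [hMHM]; simp only [mul_sub, sub_mul, hH₀', hAM]; noncomm_ring

end localRotation

end Algebra

section HilbertSpace

variable {𝓗 : Type*} [NormedAddCommGroup 𝓗] [InnerProductSpace ℂ 𝓗] [CompleteSpace 𝓗] {ξ : 𝓗}

theorem Anticommute.inner_apply_self_eq_zero {G T : 𝓗 →L[ℂ] 𝓗} (h : Anticommute G T)
    (hG : IsSelfAdjoint G) (hGξ : G ξ = ξ) : inner ℂ ξ (T ξ) = 0 := by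
  have h' : inner ℂ ξ (T ξ) = -inner ℂ ξ (T ξ) := by
    calc inner ℂ ξ (T ξ) = inner ℂ (G ξ) (T ξ) := by rw [hGξ]
      _ = inner ℂ ξ ((G * T) ξ) := by
        rw [← ContinuousLinearMap.adjoint_inner_right, ← ContinuousLinearMap.star_eq_adjoint,
          hG.star_eq, mul_apply_eq_comp]
      _ = -inner ℂ ξ (T ξ) := by
        rw [h.eq, neg_apply, mul_apply_eq_comp, hGξ, inner_neg_right]
  linear_combination h' / 2

theorem inner_sum_conjugate_localRotation_sub_mul_measProj {A P N Nc Na : 𝓗 →L[ℂ] 𝓗} {β : ℂ}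
    (hξ : ‖ξ‖ = 1) (hA : IsSelfAdjoint A) (hAξ : A ξ = ξ) (hAP : Commute A P)
    (hAc : Commute A Nc) (hAa : Anticommute A Na) (hN : IsSelfAdjoint N) (hsplit : N = Nc + Na)
    (hca : Anticommute Nc Na) (hNN : N * N = 1) (ha : Na * Na = β • 1) (θ : ℝ) :
    inner ℂ ξ ((∑ k ∈ ({-1, 1} : Finset ℂ),
      (star (localRotation N θ k) * A * localRotation N θ k - A) * measProj P k) ξ) =
        -2 * Real.sin θ ^ 2 * β := by
  subst hsplit
  set a : 𝓗 →L[ℂ] 𝓗 := -(2 * Real.sin θ ^ 2 : ℂ) • (β • 1 + Nc * Na)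
  set b : 𝓗 →L[ℂ] 𝓗 := -(2 * Complex.I * Real.sin θ * Real.cos θ : ℂ) • Na
  have hsum : ∑ k ∈ ({-1, 1} : Finset ℂ),
      (star (localRotation (Nc + Na) θ k) * A * localRotation (Nc + Na) θ k - A) *
        measProj P k = (a + b * P) * A := by
    rw [← sum_add_smul_mul_measProj (P := P) a b, sum_mul]
    refine sum_congr rfl fun k hk => ?_
    obtain ⟨hk, hk'⟩ := star_eq_self_and_mul_self_of_mem hk
    rw [hAc.conjugate_localRotation_sub hAa hN hca hNN ha hk hk']
    exact (hAP.measProj_right k).right_comm _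
  have hcross : inner ℂ ξ ((Nc * Na) ξ) = 0 :=
    (hAc.mul_right_of_anticommute hAa).inner_apply_self_eq_zero hA hAξ
  have hflip : inner ℂ ξ ((Na * P) ξ) = 0 :=
    (hAa.mul_right_of_commute hAP).inner_apply_self_eq_zero hA hAξ
  rw [hsum, mul_apply_eq_comp, hAξ]
  simp only [a, b, smul_mul_assoc, add_apply, smul_apply, one_apply_eq_self, inner_add_right,
    inner_smul_right, hcross, hflip, inner_self_eq_one_of_norm_eq_one hξ]
  ring

noncomputable def measuredEnergy (ξ : 𝓗) (H P : 𝓗 →L[ℂ] 𝓗) : ℂ :=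
  ∑ k ∈ ({-1, 1} : Finset ℂ), inner ℂ ξ ((measProj P k * H * measProj P k) ξ)

noncomputable def rotatedEnergy (ξ : 𝓗) (H P N : 𝓗 →L[ℂ] 𝓗) (θ : ℝ) : ℂ :=
  ∑ k ∈ ({-1, 1} : Finset ℂ), inner ℂ ξ
    ((measProj P k * star (localRotation N θ k) * H * localRotation N θ k * measProj P k) ξ)

theorem rotatedEnergy_sub_measuredEnergy {H₀ A₁ A₂ B₁ B₂ P N Nc Na : 𝓗 →L[ℂ] 𝓗} {β : ℂ}
    (hξ : ‖ξ‖ = 1) (hP : P * P = 1)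
    (hA₁ : IsSelfAdjoint A₁) (hA₁ξ : A₁ ξ = ξ) (hA₁P : Commute A₁ P)
    (hA₁c : Commute A₁ Nc) (hA₁a : Anticommute A₁ Na)
    (hA₂ : IsSelfAdjoint A₂) (hA₂ξ : A₂ ξ = ξ) (hA₂P : Commute A₂ P)
    (hA₂c : Commute A₂ Nc) (hA₂a : Anticommute A₂ Na)
    (hB₁P : Anticommute B₁ P) (hB₂P : Anticommute B₂ P) (hH₀ : Commute H₀ N)
    (hN : IsSelfAdjoint N) (hsplit : N = Nc + Na) (hca : Anticommute Nc Na) (hNN : N * N = 1)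
    (ha : Na * Na = β • 1) (hNP : Commute N P) (θ : ℝ) :
    rotatedEnergy ξ (H₀ - A₁ - A₂ - B₁ - B₂) P N θ - measuredEnergy ξ (H₀ - A₁ - A₂ - B₁ - B₂) P =
      4 * Real.sin θ ^ 2 * β := by
  have hstep : ∀ k ∈ ({-1, 1} : Finset ℂ),
      measProj P k * star (localRotation N θ k) * (H₀ - A₁ - A₂ - B₁ - B₂) *
          localRotation N θ k * measProj P k -
        measProj P k * (H₀ - A₁ - A₂ - B₁ - B₂) * measProj P k =
      -((star (localRotation N θ k) * A₁ * localRotation N θ k - A₁) +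
          (star (localRotation N θ k) * A₂ * localRotation N θ k - A₂)) * measProj P k :=
    fun k hk => measProj_mul_localRotation_conjugate_sub hN hNN
      (star_eq_self_and_mul_self_of_mem hk).1 (star_eq_self_and_mul_self_of_mem hk).2 hP hNP hH₀
      hA₁P hA₂P hB₁P hB₂P
  rw [rotatedEnergy, measuredEnergy, ← sum_sub_distrib]
  simp only [← inner_sub_right, ← sub_apply, ← inner_sum, ← _root_.sum_apply]
  rw [sum_congr rfl hstep]
  simp only [neg_mul, add_mul, sum_neg_distrib, sum_add_distrib, neg_apply, add_apply,
    inner_neg_right, inner_add_right,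
    inner_sum_conjugate_localRotation_sub_mul_measProj hξ hA₁ hA₁ξ hA₁P hA₁c hA₁a hN hsplit hca
      hNN ha,
    inner_sum_conjugate_localRotation_sub_mul_measProj hξ hA₂ hA₂ξ hA₂P hA₂c hA₂a hN hsplit hca
      hNN ha]
  ring

end HilbertSpace

theorem no_energy_teleportation_general {𝓗 : Type*} [NormedAddCommGroup 𝓗]
    [InnerProductSpace ℂ 𝓗] [CompleteSpace 𝓗] (ξ : 𝓗) (hξ : ‖ξ‖ = 1)
    (H₀ A₁ A₂ B₁ B₂ P X Y Z : 𝓗 →L[ℂ] 𝓗)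
    (hA₁sa : IsSelfAdjoint A₁) (hA₂sa : IsSelfAdjoint A₂)
    (hXsa : IsSelfAdjoint X)
    (hYsa : IsSelfAdjoint Y) (hZsa : IsSelfAdjoint Z)
    (hP2 : P * P = 1) (hX2 : X * X = 1) (hY2 : Y * Y = 1) (hZ2 : Z * Z = 1)
    (hA₁ξ : A₁ ξ = ξ) (hA₂ξ : A₂ ξ = ξ)
    (hXY : X * Y = Complex.I • Z) (hYX : Y * X = -(Complex.I • Z))
    (hYZ : Y * Z = Complex.I • X) (hZY : Z * Y = -(Complex.I • X))
    (hZX : Z * X = Complex.I • Y) (hXZ : X * Z = -(Complex.I • Y))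
    (hH₀X : H₀ * X = X * H₀) (hH₀Y : H₀ * Y = Y * H₀) (hH₀Z : H₀ * Z = Z * H₀)
    (hA₁X : A₁ * X = X * A₁) (hA₁Y : A₁ * Y = -(Y * A₁)) (hA₁Z : A₁ * Z = -(Z * A₁))
    (hA₂X : A₂ * X = X * A₂) (hA₂Y : A₂ * Y = -(Y * A₂)) (hA₂Z : A₂ * Z = -(Z * A₂))
    (hPX : P * X = X * P) (hPY : P * Y = Y * P) (hPZ : P * Z = Z * P)
    (hPA₁ : P * A₁ = A₁ * P) (hPA₂ : P * A₂ = A₂ * P)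
    (hPB₁ : P * B₁ = -(B₁ * P)) (hPB₂ : P * B₂ = -(B₂ * P))
    (n_x n_y n_z : ℝ) (hn : n_x ^ 2 + n_y ^ 2 + n_z ^ 2 = 1) (θ : ℝ) :
    let H : 𝓗 →L[ℂ] 𝓗 := H₀ - A₁ - A₂ - B₁ - B₂
    let N : 𝓗 →L[ℂ] 𝓗 := (n_x : ℂ) • X + (n_y : ℂ) • Y + (n_z : ℂ) • Z
    let M : ℂ → (𝓗 →L[ℂ] 𝓗) := fun k => (1 / 2 : ℂ) • (1 + k • P)
    let U : ℂ → (𝓗 →L[ℂ] 𝓗) := fun k =>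
      (Real.cos θ : ℂ) • 1 + (Complex.I * k * Real.sin θ) • N
    let E_B : ℂ := ∑ k ∈ ({-1, 1} : Finset ℂ),
      (inner ℂ ξ ((M k * ContinuousLinearMap.adjoint (U k) * H * U k * M k) ξ) : ℂ)
    let E_A : ℂ := ∑ k ∈ ({-1, 1} : Finset ℂ), (inner ℂ ξ ((M k * H * M k) ξ) : ℂ)
    E_B - E_A = 4 * ((Real.sin θ : ℂ)) ^ 2 * ((n_y : ℂ) ^ 2 + (n_z : ℂ) ^ 2) ∧
      E_A.re ≤ E_B.re := by
  intro H N M U E_B E_A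
  have hXY' : Anticommute X Y := .of_eq_neg hXY hYX
  have hXZ' : Anticommute X Z := (Anticommute.of_eq_neg hZX hXZ).symm
  have hsplit : N = (n_x : ℂ) • X + ((n_y : ℂ) • Y + (n_z : ℂ) • Z) := add_assoc _ _ _
  have hca : Anticommute ((n_x : ℂ) • X) ((n_y : ℂ) • Y + (n_z : ℂ) • Z) :=
    ((hXY'.smul_right _).add_right (hXZ'.smul_right _)).smul_left _
  have ha := (Anticommute.of_eq_neg hYZ hZY).smul_add_smul_mul_self hY2 hZ2 (n_y : ℂ) n_z
  have hNN : N * N = 1 := by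
    have hnC : (n_x : ℂ) ^ 2 + (n_y : ℂ) ^ 2 + (n_z : ℂ) ^ 2 = 1 := by exact_mod_cast hn
    rw [hsplit, hca.add_mul_self, ha, smul_mul_smul_comm, hX2, ← add_smul, ← sq, ← add_assoc,
      hnC, one_smul]
  have hN : IsSelfAdjoint N :=
    ((IsSelfAdjoint.smul (Complex.conj_ofReal n_x) hXsa).add
      (IsSelfAdjoint.smul (Complex.conj_ofReal n_y) hYsa)).add
        (IsSelfAdjoint.smul (Complex.conj_ofReal n_z) hZsa)
  have hNP : Commute N P := (((Commute.smul_right hPX _).add_right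
    (Commute.smul_right hPY _)).add_right (Commute.smul_right hPZ _)).symm
  have hH₀N : Commute H₀ N := ((Commute.smul_right hH₀X _).add_right
    (Commute.smul_right hH₀Y _)).add_right (Commute.smul_right hH₀Z _)
  have hdiff : E_B - E_A = 4 * (Real.sin θ : ℂ) ^ 2 * ((n_y : ℂ) ^ 2 + (n_z : ℂ) ^ 2) :=
    rotatedEnergy_sub_measuredEnergy hξ hP2
      hA₁sa hA₁ξ (Commute.symm hPA₁) (Commute.smul_right hA₁X _)
      ((Anticommute.smul_right hA₁Y _).add_right (Anticommute.smul_right hA₁Z _))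
      hA₂sa hA₂ξ (Commute.symm hPA₂) (Commute.smul_right hA₂X _)
      ((Anticommute.smul_right hA₂Y _).add_right (Anticommute.smul_right hA₂Z _))
      (Anticommute.symm hPB₁) (Anticommute.symm hPB₂) hH₀N hN hsplit hca hNN ha hNP θ
  exact ⟨hdiff, sub_nonneg.mp (by rw [← Complex.sub_re, hdiff]; norm_cast; positivity)⟩

/-- Main result of the paper: in the abstract toric code QET model, the energy
difference `E_B − E_A` equals `4·sin²θ·(n_y² + n_z²) ≥ 0`, so Bob cannot extract
energy by any such conditional local unitary: `E_B ≥ E_A`, i.e. no quantum energy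
teleportation. -/
theorem no_energy_teleportation {𝓗 : Type*} [NormedAddCommGroup 𝓗]
    [InnerProductSpace ℂ 𝓗] [CompleteSpace 𝓗] (ξ : 𝓗) (hξ : ‖ξ‖ = 1)
    (H₀ A₁ A₂ B₁ B₂ P X Y Z : 𝓗 →L[ℂ] 𝓗)
    (hA₁sa : IsSelfAdjoint A₁) (hA₂sa : IsSelfAdjoint A₂)
    (hB₁sa : IsSelfAdjoint B₁) (hB₂sa : IsSelfAdjoint B₂)
    (hPsa : IsSelfAdjoint P) (hXsa : IsSelfAdjoint X)
    (hYsa : IsSelfAdjoint Y) (hZsa : IsSelfAdjoint Z)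
    (hA₁2 : A₁ * A₁ = 1) (hA₂2 : A₂ * A₂ = 1) (hB₁2 : B₁ * B₁ = 1) (hB₂2 : B₂ * B₂ = 1)
    (hP2 : P * P = 1) (hX2 : X * X = 1) (hY2 : Y * Y = 1) (hZ2 : Z * Z = 1)
    (hA₁ξ : A₁ ξ = ξ) (hA₂ξ : A₂ ξ = ξ) (hB₁ξ : B₁ ξ = ξ) (hB₂ξ : B₂ ξ = ξ)
    (hXY : X * Y = Complex.I • Z) (hYX : Y * X = -(Complex.I • Z))
    (hYZ : Y * Z = Complex.I • X) (hZY : Z * Y = -(Complex.I • X))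
    (hZX : Z * X = Complex.I • Y) (hXZ : X * Z = -(Complex.I • Y))
    (hH₀X : H₀ * X = X * H₀) (hH₀Y : H₀ * Y = Y * H₀) (hH₀Z : H₀ * Z = Z * H₀)
    (hA₁X : A₁ * X = X * A₁) (hA₁Y : A₁ * Y = -(Y * A₁)) (hA₁Z : A₁ * Z = -(Z * A₁))
    (hA₂X : A₂ * X = X * A₂) (hA₂Y : A₂ * Y = -(Y * A₂)) (hA₂Z : A₂ * Z = -(Z * A₂))
    (hB₁X : B₁ * X = -(X * B₁)) (hB₁Y : B₁ * Y = -(Y * B₁)) (hB₁Z : B₁ * Z = Z * B₁)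
    (hB₂X : B₂ * X = -(X * B₂)) (hB₂Y : B₂ * Y = -(Y * B₂)) (hB₂Z : B₂ * Z = Z * B₂)
    (hPX : P * X = X * P) (hPY : P * Y = Y * P) (hPZ : P * Z = Z * P)
    (hPA₁ : P * A₁ = A₁ * P) (hPA₂ : P * A₂ = A₂ * P)
    (hPB₁ : P * B₁ = -(B₁ * P)) (hPB₂ : P * B₂ = -(B₂ * P))
    (n_x n_y n_z : ℝ) (hn : n_x ^ 2 + n_y ^ 2 + n_z ^ 2 = 1) (θ : ℝ) :
    let H : 𝓗 →L[ℂ] 𝓗 := H₀ - A₁ - A₂ - B₁ - B₂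
    let N : 𝓗 →L[ℂ] 𝓗 := (n_x : ℂ) • X + (n_y : ℂ) • Y + (n_z : ℂ) • Z
    let M : ℂ → (𝓗 →L[ℂ] 𝓗) := fun k => (1 / 2 : ℂ) • (1 + k • P)
    let U : ℂ → (𝓗 →L[ℂ] 𝓗) := fun k =>
      (Real.cos θ : ℂ) • 1 + (Complex.I * k * Real.sin θ) • N
    let E_B : ℂ := ∑ k ∈ ({-1, 1} : Finset ℂ),
      (inner ℂ ξ ((M k * ContinuousLinearMap.adjoint (U k) * H * U k * M k) ξ) : ℂ)
    let E_A : ℂ := ∑ k ∈ ({-1, 1} : Finset ℂ), (inner ℂ ξ ((M k * H * M k) ξ) : ℂ)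
    E_B - E_A = 4 * ((Real.sin θ : ℂ)) ^ 2 * ((n_y : ℂ) ^ 2 + (n_z : ℂ) ^ 2) ∧
      E_A.re ≤ E_B.re :=
  no_energy_teleportation_general ξ hξ H₀ A₁ A₂ B₁ B₂ P X Y Z hA₁sa hA₂sa hXsa hYsa hZsa hP2 hX2 hY2
    hZ2 hA₁ξ hA₂ξ hXY hYX hYZ hZY hZX hXZ hH₀X hH₀Y hH₀Z hA₁X hA₁Y hA₁Z hA₂X hA₂Y hA₂Z hPX hPY hPZ
    hPA₁ hPA₂ hPB₁ hPB₂ n_x n_y n_z hn θ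
end
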